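/- arXiv:1509.07599 — 2 statements merged into one kernel-verified Lean document; each statement's English description precedes it below -/
import Mathlib

section
/- Let Agg_R, Agg_P and Agg_P' be aggravation functions such that Agg_P'(1, 1−x) ≤ Agg_P(1, 1−x) for every x ∈ [0,1]. Let x* be the unique solution of Agg_P(1, 1−x) = Agg_R(1, x) on [0,1] and let x*' be the unique solution of Agg_P'(1, 1−x) = Agg_R(1, x) on [0,1]. Then x*' ≥ x*. -/
/-- An aggravation function `Agg(x,y)`, defined (i.e., with its axioms imposed) for
real numbers `x ≥ y`: it is nonnegative, vanishes exactly on the diagonal,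
is continuous on its domain, strictly increasing in the first argument and
strictly decreasing in the second argument. -/
structure AggravationFunction where
  toFun : ℝ → ℝ → ℝ
  nonneg : ∀ ⦃x y : ℝ⦄, y ≤ x → 0 ≤ toFun x y
  eq_zero_iff : ∀ ⦃x y : ℝ⦄, y ≤ x → (toFun x y = 0 ↔ x = y)
  continuousOn : ContinuousOn (fun p : ℝ × ℝ => toFun p.1 p.2) {p : ℝ × ℝ | p.2 ≤ p.1}
  strictMono_left : ∀ ⦃y x x' : ℝ⦄, y ≤ x → x < x' → toFun x y < toFun x' y
  strictAnti_right : ∀ ⦃x y y' : ℝ⦄, y < y' → y' ≤ x → toFun x y' < toFun x y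

/-- If the proposer is richer, i.e. his aggravation `Agg_P'(1, 1−x)` is pointwise at most
`Agg_P(1, 1−x)` on `[0,1]`, then the fair split point moves towards 1: the unique solution
`x*'` of `Agg_P'(1, 1−x) = Agg_R(1, x)` on `[0,1]` satisfies `x*' ≥ x*`, where `x*` is the
unique solution of `Agg_P(1, 1−x) = Agg_R(1, x)` on `[0,1]`. -/
theorem richer_proposer_offers_more (AR AP AP' : AggravationFunction)
    (hle : ∀ x ∈ Set.Icc (0 : ℝ) 1, AP'.toFun 1 (1 - x) ≤ AP.toFun 1 (1 - x))
    (xstar : ℝ) (hx : xstar ∈ Set.Icc (0 : ℝ) 1)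
    (hsol : AP.toFun 1 (1 - xstar) = AR.toFun 1 xstar)
    (hx_uniq : ∀ y ∈ Set.Icc (0 : ℝ) 1, AP.toFun 1 (1 - y) = AR.toFun 1 y → y = xstar)
    (xstar' : ℝ) (hx' : xstar' ∈ Set.Icc (0 : ℝ) 1)
    (hsol' : AP'.toFun 1 (1 - xstar') = AR.toFun 1 xstar')
    (hx'_uniq : ∀ y ∈ Set.Icc (0 : ℝ) 1, AP'.toFun 1 (1 - y) = AR.toFun 1 y → y = xstar') :
    xstar ≤ xstar' := by
  by_contra h
  push_neg at h
  -- h : xstar' < xstar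
  have h1 : AP.toFun 1 (1 - xstar') < AP.toFun 1 (1 - xstar) :=
    AP.strictAnti_right (by linarith) (by linarith [hx'.1])
  have h2 : AR.toFun 1 xstar < AR.toFun 1 xstar' :=
    AR.strictAnti_right h hx.2
  have h3 := hle xstar' hx'
  linarith [hsol, hsol']
end

section
/- In the Dictator Game where the dictator has budget 30 and the recipient is initially endowed with 10, let the dictator be a Fehr–Schmidt player of type (α, β) with β = 1/2 ≤ α, whose utility from donating d ∈ [0,30] is u(d) = (30 − d) − β·max(20 − 2d, 0) − α·max(2d − 20, 0). Then u is constant (equal to 20) on [0,10] and strictly decreasing on [10,30]; consequently the set of maximisers of u over [0,30] is exactly the interval [0,10] (the dictator is indifferent between all donations from 0 to 10). -/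
/-- The Fehr–Schmidt utility of a dictator of type `(α, β)` who donates `d` in the
Dictator Game DG(30, 10): the dictator's monetary payoff is `30 − d`, the recipient's
is `10 + d`, and their payoff difference is `20 − 2d`. -/
noncomputable def dgDictatorUtility (α β d : ℝ) : ℝ :=
  (30 - d) - β * max (20 - 2 * d) 0 - α * max (2 * d - 20) 0

lemma dg_le (α : ℝ) (hd : d ≤ 10) : dgDictatorUtility α (1 / 2) d = 20 := by
  unfold dgDictatorUtility
  rw [max_eq_left (by linarith), max_eq_right (by linarith)]
  ring

lemma dg_ge (α : ℝ) (hd : 10 ≤ d) :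
    dgDictatorUtility α (1 / 2) d = 30 - d - α * (2 * d - 20) := by
  unfold dgDictatorUtility
  rw [max_eq_right (by linarith), max_eq_left (by linarith)]
  ring

/-- In the Dictator Game DG(30, 10), a Fehr–Schmidt dictator of type `(α, β)` with
`β = 1/2 ≤ α` has utility constant (equal to 20) on `[0, 10]` and strictly decreasing
on `[10, 30]`; consequently the set of maximisers of his utility over `[0, 30]` is
exactly `[0, 10]`. -/
theorem indifferent_dictator (α : ℝ) (hα : 1 / 2 ≤ α) :
    (∀ d ∈ Set.Icc (0 : ℝ) 10, dgDictatorUtility α (1 / 2) d = 20) ∧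
    StrictAntiOn (dgDictatorUtility α (1 / 2)) (Set.Icc (10 : ℝ) 30) ∧
    {d | d ∈ Set.Icc (0 : ℝ) 30 ∧
        ∀ e ∈ Set.Icc (0 : ℝ) 30, dgDictatorUtility α (1 / 2) e ≤ dgDictatorUtility α (1 / 2) d}
      = Set.Icc (0 : ℝ) 10 := by
  have hmax : ∀ e ∈ Set.Icc (0 : ℝ) 30, dgDictatorUtility α (1 / 2) e ≤ 20 := by
    intro e he
    rcases le_or_gt e 10 with h | h
    · rw [dg_le α h]
    · rw [dg_ge α h.le]
      nlinarith [he.2]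
  refine ⟨fun d hd => dg_le α hd.2, ?_, ?_⟩
  · intro x hx y hy hxy
    rw [dg_ge α hx.1, dg_ge α hy.1]
    nlinarith
  · ext d
    simp only [Set.mem_setOf_eq, Set.mem_Icc]
    constructor
    · rintro ⟨⟨h0, h30⟩, hm⟩
      refine ⟨h0, ?_⟩
      by_contra h
      push_neg at h
      have := hm 0 ⟨le_refl 0, by norm_num⟩
      rw [dg_le α (by norm_num), dg_ge α h.le] at this
      nlinarith
    · rintro ⟨h0, h10⟩
      refine ⟨⟨h0, by linarith⟩, fun e he => ?_⟩
      rw [dg_le α h10]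
      exact hmax e he
end
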